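/- Let X be a quiver, let Δ : X ⥤q X × X be the diagonal prefunctor into the product quiver (sending a vertex a to (a,a) and an arrow e to (e,e)), and let fst, snd : X × X ⥤q X be the two projection prefunctors. Then: (1) for every path p from a to b in X, fst.mapPath (Δ.mapPath p) = p and snd.mapPath (Δ.mapPath p) = p; and (2) conversely, every path π from (a,a) to (b,b) in X × X whose two projections are equal, i.e. fst.mapPath π = snd.mapPath π, satisfies π = Δ.mapPath (fst.mapPath π). -/

import Mathlib

open Quiver

universe u v

/-- The product quiver: an arrow `(a,c) ⟶ (b,d)` is a pair of an arrow `a ⟶ b`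
and an arrow `c ⟶ d`. -/
instance prodQuiver (X Y : Type u) [Quiver.{v+1} X] [Quiver.{v+1} Y] : Quiver (X × Y) :=
  ⟨fun p q => (p.1 ⟶ q.1) × (p.2 ⟶ q.2)⟩

/-- The diagonal prefunctor `Δ : X ⥤q (X × X)`. -/
def diagPrefunctor (X : Type u) [Quiver.{v+1} X] : X ⥤q (X × X) where
  obj a := (a, a)
  map e := (e, e)

/-- The first projection prefunctor `X × X ⥤q X`. -/
def fstPrefunctor (X : Type u) [Quiver.{v+1} X] : (X × X) ⥤q X where
  obj p := p.1
  map e := e.1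

/-- The second projection prefunctor `X × X ⥤q X`. -/
def sndPrefunctor (X : Type u) [Quiver.{v+1} X] : (X × X) ⥤q X where
  obj p := p.2
  map e := e.2

/-! A path in `X × X` is determined by its two projections, since an arrow of `X × X` is a
pair of arrows and `Path.cons` is injective. The path `Δ (fst π)` has projections `fst π` and
`fst π = snd π`, because `Δ` followed by either projection is the identity prefunctor. -/

section

variable {X : Type u} [Quiver.{v+1} X]

theorem fstPrefunctor_mapPath_diagPrefunctor_mapPath {a b : X} (p : Path a b) :
    (fstPrefunctor X).mapPath ((diagPrefunctor X).mapPath p) = p :=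
  (Prefunctor.mapPath_comp_apply _ _ p).symm.trans (Prefunctor.mapPath_id p)

theorem sndPrefunctor_mapPath_diagPrefunctor_mapPath {a b : X} (p : Path a b) :
    (sndPrefunctor X).mapPath ((diagPrefunctor X).mapPath p) = p :=
  (Prefunctor.mapPath_comp_apply _ _ p).symm.trans (Prefunctor.mapPath_id p)

theorem Quiver.Path.eq_of_fstPrefunctor_mapPath_eq_of_sndPrefunctor_mapPath_eq
    {s t : X × X} {π π' : Path s t}
    (h₁ : (fstPrefunctor X).mapPath π = (fstPrefunctor X).mapPath π')
    (h₂ : (sndPrefunctor X).mapPath π = (sndPrefunctor X).mapPath π') : π = π' := by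
  induction π with
  | nil =>
    cases π' with
    | nil => rfl
    | cons _ _ => exact absurd h₁ (Path.nil_ne_cons _ _)
  | @cons c _ π e ih =>
    cases π' with
    | nil => exact absurd h₁ (Path.cons_ne_nil _ _)
    | @cons c' _ π' e' =>
      rw [Prefunctor.mapPath_cons, Prefunctor.mapPath_cons] at h₁ h₂
      obtain rfl : c = c' :=
        Prod.ext (Path.obj_eq_of_cons_eq_cons h₁) (Path.obj_eq_of_cons_eq_cons h₂)
      obtain rfl : π = π' := ih (eq_of_heq (Path.heq_of_cons_eq_cons h₁))
        (eq_of_heq (Path.heq_of_cons_eq_cons h₂))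
      obtain rfl : e = e' := Prod.ext (eq_of_heq (Path.hom_heq_of_cons_eq_cons h₁))
        (eq_of_heq (Path.hom_heq_of_cons_eq_cons h₂))
      rfl

end

/-- (1) For every path `p` from `a` to `b` in `X`, both projections of the
diagonal image of `p` equal `p`; (2) conversely every path `π` from `(a,a)` to `(b,b)` in
`X × X` whose two projections agree is the diagonal image of its first projection. -/
theorem statement2 (X : Type u) [Quiver.{v+1} X] (a b : X) :
    (∀ p : Path a b,
      (fstPrefunctor X).mapPath ((diagPrefunctor X).mapPath p) = p ∧
      (sndPrefunctor X).mapPath ((diagPrefunctor X).mapPath p) = p) ∧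
    (∀ π : Path ((a, a) : X × X) (b, b),
      (fstPrefunctor X).mapPath π = (sndPrefunctor X).mapPath π →
      π = (diagPrefunctor X).mapPath ((fstPrefunctor X).mapPath π)) := by
  refine ⟨fun p => ⟨fstPrefunctor_mapPath_diagPrefunctor_mapPath p,
    sndPrefunctor_mapPath_diagPrefunctor_mapPath p⟩, fun π h => ?_⟩
  apply Path.eq_of_fstPrefunctor_mapPath_eq_of_sndPrefunctor_mapPath_eq
  · exact (fstPrefunctor_mapPath_diagPrefunctor_mapPath _).symm
  · exact h.symm.trans (sndPrefunctor_mapPath_diagPrefunctor_mapPath _).symm
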